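/- Let (V, W, ∧, [·,·], ι, 𝓛, B) be a calculus over R. Setting L := V[1], M̃ := W[1][[z]], d := zB, 𝓛_x := 𝓛_x, and I_x := (−1)^{|x|}ι_x for x ∈ V, the triple (d, 𝓛, I) with ρ = 0 satisfies the three CH relations: [d, I_y] + I_{δy} + z𝓛_y = 0 (with δ = 0), I_{[y₁,y₂]} = (−1)^{|y₁|}[𝓛_{y₁}, I_{y₂}], and [𝓛_{y₁}, 𝓛_{y₂}] = 𝓛_{[y₁,y₂]}; hence M̃ is a CH module over L with ℓ_k^{M̃} = 0 for k ≥ 2. -/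

import Mathlib

/-!
All structure maps act on `W[[z]]` coefficientwise, and `z` commutes with each of them, so every
CH relation is an identity between operators on `W`. Since `d = zB` has the parity of `B`, the
factor `z` comes out of `[d, I_x]`, and relation (3.4) becomes the Cartan formula `l_x = [B, ι_x]`
once the sign of `I_x = (−1)^{|x|} ι_x` is absorbed; (3.5) is the axiom
`ι_{l_{x₁}x₂} = [l_{x₁}, ι_{x₂}]` after moving signs, and (3.6) is the Lie module relation.
-/

noncomputable section

def sgn (n : ℤ) : ℤ := ((Int.negOnePow n : ℤˣ) : ℤ)

variable {R : Type*} [CommRing R]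

/-- Graded commutator of operators of the indicated degrees. -/
def gcomm {M : Type*} [AddCommGroup M] [Module R M]
    (P : M →ₗ[R] M) (dp : ℤ) (Q : M →ₗ[R] M) (dq : ℤ) : M →ₗ[R] M :=
  P ∘ₗ Q - sgn (dp * dq) • (Q ∘ₗ P)

variable {W : Type*} [AddCommGroup W] [Module R W]

/-- Multiplication by the degree-2 formal variable `z` on `W[[z]] = ℕ → W`. -/
def zOp : (ℕ → W) →ₗ[R] (ℕ → W) where
  toFun f n := if n = 0 then 0 else f (n - 1)
  map_add' f g := by funext n; by_cases h : n = 0 <;> simp [h]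
  map_smul' c f := by funext n; by_cases h : n = 0 <;> simp [h]

lemma sgn_add (a b : ℤ) : sgn (a + b) = sgn a * sgn b := by
  simp [sgn, Int.negOnePow_add]

lemma sgn_mul_self (a : ℤ) : sgn a * sgn a = 1 := by
  simp [sgn, ← Units.val_mul]

lemma sgn_sub_one (a : ℤ) : sgn (a - 1) = -sgn a := by
  simp [sgn, Int.negOnePow_sub]

lemma sgn_eq_sgn_of_even_sub {a b : ℤ} (h : Even (a - b)) : sgn a = sgn b := by
  simp only [sgn, (Int.negOnePow_eq_iff a b).2 h]

section GradedCommutator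

variable {M : Type*} [AddCommGroup M] [Module R M]

lemma gcomm_zsmul_left (P Q : M →ₗ[R] M) (dp dq c : ℤ) :
    gcomm (c • P) dp Q dq = c • gcomm P dp Q dq := by
  simp only [gcomm, LinearMap.smul_comp, LinearMap.comp_smul, smul_sub, smul_comm c]

lemma gcomm_zsmul_right (P Q : M →ₗ[R] M) (dp dq c : ℤ) :
    gcomm P dp (c • Q) dq = c • gcomm P dp Q dq := by
  simp only [gcomm, LinearMap.smul_comp, LinearMap.comp_smul, smul_sub, smul_comm c]

lemma gcomm_congr_left_degree (P Q : M →ₗ[R] M) {dp dp' : ℤ} (dq : ℤ) (h : Even (dp - dp')) :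
    gcomm P dp Q dq = gcomm P dp' Q dq := by
  have hsgn : sgn (dp * dq) = sgn (dp' * dq) :=
    sgn_eq_sgn_of_even_sub (by rw [← sub_mul]; exact h.mul_right dq)
  rw [gcomm, gcomm, hsgn]

lemma gcomm_comp_left_of_comp_comm (P Q T : M →ₗ[R] M) (dp dq : ℤ) (hT : T ∘ₗ Q = Q ∘ₗ T) :
    gcomm (T ∘ₗ P) dp Q dq = T ∘ₗ gcomm P dp Q dq := by
  simp only [gcomm, LinearMap.comp_sub, LinearMap.comp_smul, ← LinearMap.comp_assoc, hT]

lemma gcomm_compLeft (P Q : M →ₗ[R] M) (dp dq : ℤ) (I : Type*) :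
    gcomm (P.compLeft I) dp (Q.compLeft I) dq = (gcomm P dp Q dq).compLeft I :=
  rfl

lemma gcomm_smul_sgn_add_eq_zero_of_eq_gcomm {B I L : M →ₗ[R] M} {d : ℤ}
    (h : sgn (d - 1) • L = gcomm B (-1) I d) :
    gcomm B (-1) (sgn d • I) d + L = 0 := by
  rw [gcomm_zsmul_right, ← h, smul_smul, sgn_sub_one, mul_neg, sgn_mul_self, neg_one_smul,
    neg_add_cancel]

lemma sgn_smul_eq_gcomm_of_eq_gcomm {I L Q : M →ₗ[R] M} {d₁ d₂ : ℤ}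
    (h : sgn (d₁ - 1) • I = gcomm (sgn (d₁ - 1) • L) (d₁ + 1) Q d₂) :
    sgn (d₁ + d₂ - 1) • I = sgn (d₁ - 1) • gcomm L (d₁ - 1) (sgn d₂ • Q) d₂ := by
  rw [gcomm_zsmul_left, gcomm_congr_left_degree (dp := d₁ + 1) (dp' := d₁ - 1) _ _ _ ⟨1, by ring⟩]
    at h
  rw [gcomm_zsmul_right, smul_comm, ← h, smul_smul, ← sgn_add, add_comm, add_sub_assoc]

end GradedCommutator

section CompLeft

variable {M N : Type*} [AddCommGroup M] [Module R M] [AddCommGroup N] [Module R N]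
  (f g : M →ₗ[R] N) (I : Type*)

lemma LinearMap.compLeft_add : (f + g).compLeft I = f.compLeft I + g.compLeft I :=
  rfl

lemma LinearMap.compLeft_zero : (0 : M →ₗ[R] N).compLeft I = 0 :=
  rfl

lemma LinearMap.compLeft_zsmul (c : ℤ) : (c • f).compLeft I = c • f.compLeft I :=
  rfl

end CompLeft

lemma zOp_comp_compLeft (f : W →ₗ[R] W) : zOp ∘ₗ f.compLeft ℕ = f.compLeft ℕ ∘ₗ zOp := by
  ext g n
  by_cases hn : n = 0 <;> simp [zOp, hn]

theorem calculus_gives_CH_module_general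
    {V : Type*} [AddCommGroup V] [Module R V] (𝒱 : ℤ → Submodule R V)
    (br : V →ₗ[R] V →ₗ[R] V)               -- the graded Lie bracket on V[1]
    (ι : V →ₗ[R] (W →ₗ[R] W))              -- the V-module structure on W
    (lie : V →ₗ[R] (W →ₗ[R] W))            -- the graded Lie module structure 𝓛 on W[1]
    (B : W →ₗ[R] W)                        -- B ∈ End^{-1}(W)
    -- graded Lie module structure 𝓛 : V[1] ⊗ W[1] → W[1]
    (hliemod : ∀ (d₁ d₂ : ℤ) (x₁ x₂ : V), x₁ ∈ 𝒱 d₁ → x₂ ∈ 𝒱 d₂ →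
      gcomm (lie x₁) (d₁ - 1) (lie x₂) (d₂ - 1) = lie (br x₁ x₂))
    -- calculus axiom: ι_{l_{x₁}x₂} = [l_{x₁}, ι_{x₂}]
    (hiota : ∀ (d₁ d₂ : ℤ) (x₁ x₂ : V), x₁ ∈ 𝒱 d₁ → x₂ ∈ 𝒱 d₂ →
      ι (sgn (d₁ - 1) • br x₁ x₂) =
        gcomm (sgn (d₁ - 1) • lie x₁) (d₁ + 1) (ι x₂) d₂)
    -- calculus axiom: l_x = [B, ι_x]
    (hcartan : ∀ (d₁ : ℤ) (x : V), x ∈ 𝒱 d₁ →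
      sgn (d₁ - 1) • lie x = gcomm B (-1) (ι x) d₁) :
    -- CH relation (3.4), with δ = 0, d := zB, I_x := (−1)^{|x|} ι_x :
    (∀ (d₁ : ℤ) (x : V), x ∈ 𝒱 d₁ →
      gcomm (R := R) (zOp ∘ₗ B.compLeft ℕ) 1 (sgn d₁ • (ι x).compLeft ℕ) d₁
        + zOp ∘ₗ (lie x).compLeft ℕ = 0) ∧
    -- CH relation (3.5), with ρ = 0 :
    (∀ (d₁ d₂ : ℤ) (x₁ x₂ : V), x₁ ∈ 𝒱 d₁ → x₂ ∈ 𝒱 d₂ →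
      sgn (d₁ + d₂ - 1) • (ι (br x₁ x₂)).compLeft ℕ =
        sgn (d₁ - 1) •
          gcomm (R := R) ((lie x₁).compLeft ℕ) (d₁ - 1)
            (sgn d₂ • (ι x₂).compLeft ℕ) d₂) ∧
    -- CH relation (3.6) reduces (ρ = 0) to the Lie module relation on W[[z]] :
    (∀ (d₁ d₂ : ℤ) (x₁ x₂ : V), x₁ ∈ 𝒱 d₁ → x₂ ∈ 𝒱 d₂ →
      gcomm (R := R) ((lie x₁).compLeft ℕ) (d₁ - 1) ((lie x₂).compLeft ℕ) (d₂ - 1) =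
        (lie (br x₁ x₂)).compLeft ℕ) := by
  refine ⟨fun d x hx => ?_, fun d₁ d₂ x₁ x₂ h₁ h₂ => ?_, fun d₁ d₂ x₁ x₂ h₁ h₂ => ?_⟩
  · rw [← LinearMap.compLeft_zsmul,
      gcomm_congr_left_degree (dp := 1) (dp' := -1) _ _ _ ⟨1, by ring⟩,
      gcomm_comp_left_of_comp_comm _ _ _ _ _ (zOp_comp_compLeft _), gcomm_compLeft,
      ← LinearMap.comp_add, ← LinearMap.compLeft_add,
      gcomm_smul_sgn_add_eq_zero_of_eq_gcomm (hcartan d x hx), LinearMap.compLeft_zero,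
      LinearMap.comp_zero]
  · have hι := hiota d₁ d₂ x₁ x₂ h₁ h₂
    rw [map_zsmul] at hι
    simp only [← LinearMap.compLeft_zsmul, gcomm_compLeft, sgn_smul_eq_gcomm_of_eq_gcomm hι]
  · rw [gcomm_compLeft, hliemod d₁ d₂ x₁ x₂ h₁ h₂]

/-- let `(V, W, ∧, [·,·], ι, 𝓛, B)` be a calculus over `R`.  Setting
`L := V[1]`, `M̃ := W[1][[z]]`, `d := zB`, `I_x := (−1)^{|x|}ι_x` and `ρ := 0`,
the three CH relations hold:
`[d, I_y] + I_{δy} + z𝓛_y = 0` (with `δ = 0`),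
`I_{[y₁,y₂]} = (−1)^{|y₁|}[𝓛_{y₁}, I_{y₂}]`, and
`[𝓛_{y₁}, 𝓛_{y₂}] = 𝓛_{[y₁,y₂]}`;
hence `M̃` is a CH module over `L` with `ℓ_k^{M̃} = 0` for `k ≥ 2`. -/
theorem calculus_gives_CH_module
    {V : Type*} [AddCommGroup V] [Module R V] (𝒱 : ℤ → Submodule R V)
    (wedge : V →ₗ[R] V →ₗ[R] V)            -- the product ∧ on V
    (br : V →ₗ[R] V →ₗ[R] V)               -- the graded Lie bracket on V[1]
    (ι : V →ₗ[R] (W →ₗ[R] W))              -- the V-module structure on W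
    (lie : V →ₗ[R] (W →ₗ[R] W))            -- the graded Lie module structure 𝓛 on W[1]
    (B : W →ₗ[R] W)                        -- B ∈ End^{-1}(W)
    (hB : B ∘ₗ B = 0)
    -- degree conditions
    (hwdeg : ∀ (d₁ d₂ : ℤ) (x₁ x₂ : V), x₁ ∈ 𝒱 d₁ → x₂ ∈ 𝒱 d₂ →
      wedge x₁ x₂ ∈ 𝒱 (d₁ + d₂))
    (hbrdeg : ∀ (d₁ d₂ : ℤ) (x₁ x₂ : V), x₁ ∈ 𝒱 d₁ → x₂ ∈ 𝒱 d₂ →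
      br x₁ x₂ ∈ 𝒱 (d₁ + d₂ - 1))
    -- graded commutative algebra structure on (V, ∧)
    (hwcomm : ∀ (d₁ d₂ : ℤ) (x₁ x₂ : V), x₁ ∈ 𝒱 d₁ → x₂ ∈ 𝒱 d₂ →
      wedge x₁ x₂ = sgn (d₁ * d₂) • wedge x₂ x₁)
    -- graded Lie algebra structure on V[1] (shifted degrees |x|' = |x| − 1)
    (hbrsymm : ∀ (d₁ d₂ : ℤ) (x₁ x₂ : V), x₁ ∈ 𝒱 d₁ → x₂ ∈ 𝒱 d₂ →
      br x₁ x₂ = -(sgn ((d₁ - 1) * (d₂ - 1)) • br x₂ x₁))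
    (hbrjac : ∀ (d₁ d₂ d₃ : ℤ) (x₁ x₂ x₃ : V), x₁ ∈ 𝒱 d₁ → x₂ ∈ 𝒱 d₂ → x₃ ∈ 𝒱 d₃ →
      br x₁ (br x₂ x₃) = br (br x₁ x₂) x₃ + sgn ((d₁ - 1) * (d₂ - 1)) • br x₂ (br x₁ x₃))
    -- graded Lie module structure 𝓛 : V[1] ⊗ W[1] → W[1]
    (hliemod : ∀ (d₁ d₂ : ℤ) (x₁ x₂ : V), x₁ ∈ 𝒱 d₁ → x₂ ∈ 𝒱 d₂ →
      gcomm (lie x₁) (d₁ - 1) (lie x₂) (d₂ - 1) = lie (br x₁ x₂))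
    -- calculus axiom: l_{x₁}(x₂ ∧ x₃) = (l_{x₁}x₂) ∧ x₃ + (−1)^{(|x₁|+1)|x₂|} x₂ ∧ l_{x₁}x₃
    (hleib : ∀ (d₁ d₂ d₃ : ℤ) (x₁ x₂ x₃ : V), x₁ ∈ 𝒱 d₁ → x₂ ∈ 𝒱 d₂ → x₃ ∈ 𝒱 d₃ →
      sgn (d₁ - 1) • br x₁ (wedge x₂ x₃) =
        wedge (sgn (d₁ - 1) • br x₁ x₂) x₃ +
          sgn ((d₁ + 1) * d₂) • wedge x₂ (sgn (d₁ - 1) • br x₁ x₃))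
    -- calculus axiom: l_{x₁∧x₂} = l_{x₁} ∘ ι_{x₂} + (−1)^{|x₁|} ι_{x₁} ∘ l_{x₂}
    (hlwedge : ∀ (d₁ d₂ : ℤ) (x₁ x₂ : V), x₁ ∈ 𝒱 d₁ → x₂ ∈ 𝒱 d₂ →
      sgn (d₁ + d₂ - 1) • lie (wedge x₁ x₂) =
        (sgn (d₁ - 1) • lie x₁) ∘ₗ ι x₂ + sgn d₁ • (ι x₁ ∘ₗ (sgn (d₂ - 1) • lie x₂)))
    -- calculus axiom: ι_{l_{x₁}x₂} = [l_{x₁}, ι_{x₂}]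
    (hiota : ∀ (d₁ d₂ : ℤ) (x₁ x₂ : V), x₁ ∈ 𝒱 d₁ → x₂ ∈ 𝒱 d₂ →
      ι (sgn (d₁ - 1) • br x₁ x₂) =
        gcomm (sgn (d₁ - 1) • lie x₁) (d₁ + 1) (ι x₂) d₂)
    -- calculus axiom: l_x = [B, ι_x]
    (hcartan : ∀ (d₁ : ℤ) (x : V), x ∈ 𝒱 d₁ →
      sgn (d₁ - 1) • lie x = gcomm B (-1) (ι x) d₁) :
    -- CH relation (3.4), with δ = 0, d := zB, I_x := (−1)^{|x|} ι_x :
    (∀ (d₁ : ℤ) (x : V), x ∈ 𝒱 d₁ →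
      gcomm (R := R) (zOp ∘ₗ B.compLeft ℕ) 1 (sgn d₁ • (ι x).compLeft ℕ) d₁
        + zOp ∘ₗ (lie x).compLeft ℕ = 0) ∧
    -- CH relation (3.5), with ρ = 0 :
    (∀ (d₁ d₂ : ℤ) (x₁ x₂ : V), x₁ ∈ 𝒱 d₁ → x₂ ∈ 𝒱 d₂ →
      sgn (d₁ + d₂ - 1) • (ι (br x₁ x₂)).compLeft ℕ =
        sgn (d₁ - 1) •
          gcomm (R := R) ((lie x₁).compLeft ℕ) (d₁ - 1)
            (sgn d₂ • (ι x₂).compLeft ℕ) d₂) ∧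
    -- CH relation (3.6) reduces (ρ = 0) to the Lie module relation on W[[z]] :
    (∀ (d₁ d₂ : ℤ) (x₁ x₂ : V), x₁ ∈ 𝒱 d₁ → x₂ ∈ 𝒱 d₂ →
      gcomm (R := R) ((lie x₁).compLeft ℕ) (d₁ - 1) ((lie x₂).compLeft ℕ) (d₂ - 1) =
        (lie (br x₁ x₂)).compLeft ℕ) :=
  calculus_gives_CH_module_general 𝒱 br ι lie B hliemod hiota hcartan

end
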